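/- arXiv:0706.0496 — 4 statements merged into one kernel-verified Lean document; each statement's English description precedes it below -/
import Mathlib

section
/- For any real c > 1/(d-1) with d ≥ 2 an integer, the equation ρ = exp(c(ρ^{d-1} - 1)) has a unique solution ρ in the open interval (0,1). -/
/-!
With `n = d - 1`, the fixed points of `x ↦ exp (c (xⁿ - 1))` in `(0, ∞)` are the zeros of the
strictly convex function `φ x = c (xⁿ - 1) - log x`. As `φ 1 = 0`, strict convexity leaves room for
at most one zero of `φ` in `(0, 1)`. One exists: `exp (c (xⁿ - 1)) - x` is positive at `0`,
vanishes at `1` and has derivative `c n - 1 > 0` there, so it is negative just to the left of `1`.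
-/

open Real Set Filter Topology

theorem StrictConvexOn.eq_of_eq_zero_of_lt {s : Set ℝ} {f : ℝ → ℝ} (hf : StrictConvexOn ℝ s f)
    {x y z : ℝ} (hx : x ∈ s) (hy : y ∈ s) (hz : z ∈ s) (hxz : x < z) (hyz : y < z)
    (hfx : f x = 0) (hfy : f y = 0) (hfz : f z = 0) : x = y := by
  have not_lt : ∀ {a b}, a ∈ s → a < b → b < z → f a = 0 → f b = 0 → False :=
    fun ha hab hbz hfa hfb =>
      (hf.lt_on_openSegment ha hz (hab.trans hbz).ne
        (by rw [openSegment_eq_Ioo (hab.trans hbz)]; exact ⟨hab, hbz⟩)).ne'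
        (by rw [hfa, hfb, hfz, max_self])
  rcases lt_trichotomy x y with hxy | hxy | hxy
  · exact (not_lt hx hxy hyz hfx hfy).elim
  · exact hxy
  · exact (not_lt hy hxy hxz hfy hfx).elim

theorem exists_mem_Ioo_lt_of_hasDerivAt_pos {f : ℝ → ℝ} {f' a b : ℝ} (hab : a < b)
    (hf : HasDerivAt f f' b) (hf' : 0 < f') : ∃ x ∈ Ioo a b, f x < f b := by
  have hslope : ∀ᶠ x in 𝓝[<] b, 0 < slope f b x :=
    ((hasDerivAt_iff_tendsto_slope.1 hf).mono_left (nhdsLT_le_nhdsNE b)).eventually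
      (eventually_gt_nhds hf')
  obtain ⟨x, hx, hxab⟩ := (hslope.and (Ioo_mem_nhdsLT hab)).exists
  exact ⟨x, hxab, (slope_pos_iff_gt hxab.2).1 hx⟩

section FixedPoint

variable {n : ℕ} {c : ℝ}

theorem strictConvexOn_mul_pow_sub_one_sub_log (hc : 0 ≤ c) :
    StrictConvexOn ℝ (Ioi 0) (fun x : ℝ => c * (x ^ n - 1) - log x) := by
  have hpow : ConvexOn ℝ (Ioi 0) (fun x : ℝ => c * (x ^ n - 1)) := by
    have := (((convexOn_pow n).subset Ioi_subset_Ici_self (convex_Ioi 0)).smul hc).add_const (-c)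
    refine this.congr fun x _ => ?_
    simp only [Pi.add_apply, smul_eq_mul]
    ring
  exact hpow.add_strictConvexOn strictConcaveOn_log_Ioi.neg

theorem exists_mem_Ioo_eq_exp_mul_pow_sub_one (hcn : 1 < c * n) :
    ∃ ρ ∈ Ioo (0 : ℝ) 1, ρ = exp (c * (ρ ^ n - 1)) := by
  set F : ℝ → ℝ := fun x => exp (c * (x ^ n - 1)) - x
  have hF1 : HasDerivAt F (c * n - 1) 1 := by
    simpa using (((hasDerivAt_pow n 1).sub_const 1).const_mul c).exp.fun_sub (hasDerivAt_id' 1)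
  obtain ⟨ρ₀, hρ₀, hFρ₀⟩ := exists_mem_Ioo_lt_of_hasDerivAt_pos one_pos hF1 (by linarith)
  have hF0 : 0 < F 0 := by simpa [F] using exp_pos _
  obtain ⟨ρ, hρ, hFρ⟩ := intermediate_value_Ioo' hρ₀.1.le (by fun_prop : Continuous F).continuousOn
    ⟨by simpa [F] using hFρ₀, hF0⟩
  exact ⟨ρ, ⟨hρ.1, hρ.2.trans hρ₀.2⟩, (sub_eq_zero.1 hFρ).symm⟩

theorem eq_of_eq_exp_mul_pow_sub_one (hc : 0 ≤ c) {x y : ℝ} (hx : x ∈ Ioo (0 : ℝ) 1)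
    (hy : y ∈ Ioo (0 : ℝ) 1) (hxc : x = exp (c * (x ^ n - 1))) (hyc : y = exp (c * (y ^ n - 1))) :
    x = y := by
  have hzero : ∀ t, t = exp (c * (t ^ n - 1)) → c * (t ^ n - 1) - log t = 0 := fun t ht => by
    rw [sub_eq_zero, ht, log_exp, ← ht]
  exact (strictConvexOn_mul_pow_sub_one_sub_log hc).eq_of_eq_zero_of_lt hx.1 hy.1
    (mem_Ioi.2 one_pos) hx.2 hy.2 (hzero x hxc) (hzero y hyc) (by simp)

end FixedPoint

theorem stmt_0 (d : ℕ) (hd : 2 ≤ d) (c : ℝ) (hc : 1 / ((d : ℝ) - 1) < c) :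
    ∃! ρ : ℝ, ρ ∈ Set.Ioo (0 : ℝ) 1 ∧ ρ = Real.exp (c * (ρ ^ (d - 1) - 1)) := by
  have hn : ((d - 1 : ℕ) : ℝ) = d - 1 := by
    rw [Nat.cast_sub (by omega), Nat.cast_one]
  have hn_pos : (0 : ℝ) < d - 1 := by
    rw [← hn]; exact_mod_cast Nat.sub_pos_of_lt hd
  have hcn : 1 < c * (d - 1 : ℕ) := by
    rwa [hn, ← div_lt_iff₀ hn_pos]
  have hc0 : 0 ≤ c := (one_div_pos.2 hn_pos).le.trans hc.le
  obtain ⟨ρ, hρ, hρc⟩ := exists_mem_Ioo_eq_exp_mul_pow_sub_one hcn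
  exact ⟨ρ, ⟨hρ, hρc⟩, fun y ⟨hy, hyc⟩ => eq_of_eq_exp_mul_pow_sub_one hc0 hy hρ hyc hρc⟩
end

section
/- Let Y be a real random variable with Var(Y) ≤ γn/2 for some γ > 0 and suppose Y is integer-valued. Suppose further there is β with γ = β²/64 and 0 < β < 0.01 such that for all integers s, t with |s − E[Y]| ≤ √n, |t − E[Y]| ≤ √n and |s − t| ≤ β√n we have P(Y = t) ≥ (2/3)·P(Y = s) − n^{−10}. Then for n sufficiently large a contradiction arises; i.e., Var(Y) ≥ γn/2. -/
/-!
Write `x = β √n`, so that `γ n = (x / 8)²`, and suppose `Var Y < (x / 8)² / 2`. By Chebyshev, `Y`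
lies within `x / 8` of its mean with probability at least `1 / 2`, so one of the at most
`x / 4 + 1` integers there carries mass at least `2 / (x + 4)`. Comparability then gives each of
the roughly `2x` integers within `x` of that atom a mass of about `4 / (3x)` at least, for a total
exceeding `1`.
-/

open MeasureTheory ProbabilityTheory

namespace Int

variable {α : Type*} [Field α] [LinearOrder α] [IsStrictOrderedRing α] [FloorRing α]

lemma card_Icc_ceil_floor_le {a b : α} (h : (Finset.Icc ⌈a⌉ ⌊b⌋).Nonempty) :
    ((Finset.Icc ⌈a⌉ ⌊b⌋).card : α) ≤ b - a + 1 := by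
  have hab : ⌈a⌉ ≤ ⌊b⌋ := Finset.nonempty_Icc.1 h
  rw [Int.card_Icc, ← Int.cast_natCast, Int.toNat_of_nonneg (by omega)]
  push_cast
  linarith [Int.le_ceil a, Int.floor_le b]

lemma sub_sub_one_le_card_Icc_ceil_floor (a b : α) :
    b - a - 1 ≤ ((Finset.Icc ⌈a⌉ ⌊b⌋).card : α) := by
  rw [Int.card_Icc, ← Int.cast_natCast]
  calc b - a - 1 ≤ ((⌊b⌋ + 1 - ⌈a⌉ : ℤ) : α) := by
        push_cast
        linarith [Int.ceil_lt_add_one a, Int.sub_one_lt_floor b]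
    _ ≤ _ := by exact_mod_cast Int.self_le_toNat _

end Int

section IntegerValued

variable {Ω : Type*} [MeasurableSpace Ω] {P : Measure Ω} {Y : Ω → ℤ}

lemma one_sub_variance_div_sq_le_measureReal_abs_sub_lt [IsProbabilityMeasure P] {X : Ω → ℝ}
    (hX : MemLp X 2 P) {c : ℝ} (hc : 0 < c) :
    1 - variance X P / c ^ 2 ≤ P.real {ω | |X ω - P[X]| < c} := by
  have hmeas : NullMeasurableSet {ω | c ≤ |X ω - P[X]|} P :=
    nullMeasurableSet_le aemeasurable_const
      ((hX.aestronglyMeasurable.aemeasurable.sub aemeasurable_const).abs)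
  have hcheb : P.real {ω | c ≤ |X ω - P[X]|} ≤ variance X P / c ^ 2 :=
    ENNReal.toReal_le_of_le_ofReal (div_nonneg (variance_nonneg X P) (sq_nonneg c))
      (meas_ge_le_variance_div_sq hX hc)
  have hcompl : {ω | |X ω - P[X]| < c} = {ω | c ≤ |X ω - P[X]|}ᶜ := by
    ext; simp
  rw [hcompl, measureReal_compl₀ hmeas, probReal_univ]
  linarith

lemma sum_measureReal_fiber_le_one [IsProbabilityMeasure P] (hY : Measurable Y) (T : Finset ℤ) :
    ∑ t ∈ T, P.real {ω | Y ω = t} ≤ 1 := by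
  have : IsProbabilityMeasure (P.map Y) := Measure.isProbabilityMeasure_map hY.aemeasurable
  calc ∑ t ∈ T, P.real {ω | Y ω = t} = ∑ t ∈ T, (P.map Y).real {t} := by
        simp only [map_measureReal_apply hY (measurableSet_singleton _)]
        rfl
    _ = (P.map Y).real T := sum_measureReal_singleton T
    _ ≤ 1 := measureReal_le_one

lemma exists_le_measureReal_fiber {c r p : ℝ} (hp : 0 < p)
    (h : p ≤ P.real {ω | |(Y ω : ℝ) - c| ≤ r}) :
    ∃ s : ℤ, |(s : ℝ) - c| ≤ r ∧ p / (2 * r + 1) ≤ P.real {ω | Y ω = s} := by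
  set S := Finset.Icc ⌈c - r⌉ ⌊c + r⌋
  have mem_S {s : ℤ} : s ∈ S ↔ |(s : ℝ) - c| ≤ r := by
    rw [← Int.cast_mem_Icc_iff, Set.mem_Icc, abs_sub_le_iff]
    constructor <;> rintro ⟨h₁, h₂⟩ <;> constructor <;> linarith
  have hcover : p ≤ ∑ s ∈ S, P.real {ω | Y ω = s} := by
    calc p ≤ P.real {ω | |(Y ω : ℝ) - c| ≤ r} := h
      _ = P.real (⋃ s ∈ S, {ω | Y ω = s}) := by
        congr 1
        ext ω
        simp [mem_S]
      _ ≤ _ := measureReal_biUnion_finset_le S _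
  have hS : S.Nonempty := by
    by_contra hS
    rw [Finset.not_nonempty_iff_eq_empty.1 hS, Finset.sum_empty] at hcover
    linarith
  have hcard : (S.card : ℝ) ≤ 2 * r + 1 := by linarith [Int.card_Icc_ceil_floor_le hS]
  have hr : 0 < 2 * r + 1 := by
    have : (1 : ℝ) ≤ S.card := by exact_mod_cast hS.card_pos
    linarith
  obtain ⟨s, hsS, hs⟩ := Finset.exists_le_of_sum_le hS (f := fun _ => p / (2 * r + 1)) <| by
    calc ∑ _ ∈ S, p / (2 * r + 1) = S.card * (p / (2 * r + 1)) := by simp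
      _ ≤ (2 * r + 1) * (p / (2 * r + 1)) := by gcongr
      _ = p := by field_simp
      _ ≤ _ := hcover
  exact ⟨s, mem_S.1 hsS, hs⟩

lemma two_mul_sub_one_mul_le_one [IsProbabilityMeasure P] (hY : Measurable Y) {c x q : ℝ}
    (hq : 0 ≤ q) (h : ∀ t : ℤ, |(t : ℝ) - c| ≤ x → q ≤ P.real {ω | Y ω = t}) :
    (2 * x - 1) * q ≤ 1 := by
  set T := Finset.Icc ⌈c - x⌉ ⌊c + x⌋
  have hT : ∀ t ∈ T, q ≤ P.real {ω | Y ω = t} := by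
    intro t ht
    rw [← Int.cast_mem_Icc_iff, Set.mem_Icc] at ht
    exact h t (abs_sub_le_iff.2 ⟨by linarith, by linarith⟩)
  calc (2 * x - 1) * q ≤ T.card * q := by
        gcongr
        have := Int.sub_sub_one_le_card_Icc_ceil_floor (c - x) (c + x)
        linarith
    _ ≤ ∑ t ∈ T, P.real {ω | Y ω = t} := by
        simpa using Finset.card_nsmul_le_sum T _ q hT
    _ ≤ 1 := sum_measureReal_fiber_le_one hY T

lemma exists_near_integral_le_measureReal_fiber [IsProbabilityMeasure P]
    (hY : MemLp (fun ω => (Y ω : ℝ)) 2 P) {r : ℝ} (hr : 0 < r)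
    (hVar : variance (fun ω => (Y ω : ℝ)) P < r ^ 2 / 2) :
    ∃ s : ℤ, |(s : ℝ) - ∫ ω, (Y ω : ℝ) ∂P| ≤ r ∧
      1 / 2 / (2 * r + 1) ≤ P.real {ω | Y ω = s} := by
  refine exists_le_measureReal_fiber (by norm_num) ?_
  calc (1 : ℝ) / 2 ≤ 1 - variance (fun ω => (Y ω : ℝ)) P / r ^ 2 := by
        have : variance (fun ω => (Y ω : ℝ)) P / r ^ 2 ≤ 1 / 2 := by
          rw [div_le_iff₀ (by positivity)]
          linarith
        linarith
    _ ≤ P.real {ω | |(Y ω : ℝ) - ∫ ω, (Y ω : ℝ) ∂P| < r} :=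
      one_sub_variance_div_sq_le_measureReal_abs_sub_lt hY hr
    _ ≤ _ := measureReal_mono fun ω (hω : |(Y ω : ℝ) - ∫ ω, (Y ω : ℝ) ∂P| < r) => hω.le

lemma le_variance_of_fibers_comparable [IsProbabilityMeasure P] (hY : Measurable Y)
    (hY2 : MemLp (fun ω => (Y ω : ℝ)) 2 P) {x R ε : ℝ} (hx : 100 ≤ x) (hR : x + x / 8 ≤ R)
    (hε : ε ≤ 1 / (100 * x))
    (hcomp : ∀ s t : ℤ, |(s : ℝ) - ∫ ω, (Y ω : ℝ) ∂P| ≤ R → |(t : ℝ) - ∫ ω, (Y ω : ℝ) ∂P| ≤ R →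
      |(s : ℝ) - t| ≤ x → 2 / 3 * P.real {ω | Y ω = s} - ε ≤ P.real {ω | Y ω = t}) :
    (x / 8) ^ 2 / 2 ≤ variance (fun ω => (Y ω : ℝ)) P := by
  by_contra! hVar
  obtain ⟨s, hs, hps⟩ := exists_near_integral_le_measureReal_fiber hY2 (by positivity) hVar
  have hbound : 1 < (2 * x - 1) * (4 / (3 * (x + 4)) - 1 / (100 * x)) := by
    rw [div_sub_div _ _ (by positivity) (by positivity), mul_div_assoc',
      lt_div_iff₀ (by positivity)]
    nlinarith
  have hq : 0 ≤ 4 / (3 * (x + 4)) - 1 / (100 * x) :=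
    (pos_of_mul_pos_right (one_pos.trans hbound) (by linarith)).le
  have hspread (t : ℤ) (ht : |(t : ℝ) - s| ≤ x) :
      4 / (3 * (x + 4)) - 1 / (100 * x) ≤ P.real {ω | Y ω = t} := by
    have ht' : |(t : ℝ) - ∫ ω, (Y ω : ℝ) ∂P| ≤ R := calc
      _ ≤ |(t : ℝ) - s| + |(s : ℝ) - ∫ ω, (Y ω : ℝ) ∂P| := abs_sub_le _ _ _
      _ ≤ R := by linarith
    have hst := hcomp s t (by linarith) ht' (by rwa [abs_sub_comm])
    have : 2 / 3 * (1 / 2 / (2 * (x / 8) + 1)) = 4 / (3 * (x + 4)) := by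
      field_simp
      ring
    linarith
  linarith [two_mul_sub_one_mul_le_one hY hq hspread]

end IntegerValued

/-- If an integer-valued random variable enjoys the stated locality property,
then its variance cannot be smaller than `γ n / 2`. -/
theorem stmt_5 (β γ : ℝ) (hβ0 : 0 < β) (hβ1 : β < 0.01) (hγ : γ = β ^ 2 / 64) :
    ∃ N : ℕ, ∀ n : ℕ, N ≤ n →
      ∀ (Ω : Type) (_ : MeasurableSpace Ω) (P : Measure Ω)
        (_ : IsProbabilityMeasure P) (Y : Ω → ℤ),
        Measurable Y →
        Integrable (fun ω => ((Y ω : ℝ)) ^ 2) P →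
        (∀ s t : ℤ,
          |(s : ℝ) - ∫ ω, (Y ω : ℝ) ∂P| ≤ Real.sqrt n →
          |(t : ℝ) - ∫ ω, (Y ω : ℝ) ∂P| ≤ Real.sqrt n →
          |(s : ℝ) - (t : ℝ)| ≤ β * Real.sqrt n →
          (P {ω | Y ω = t}).toReal ≥
            (2 / 3) * (P {ω | Y ω = s}).toReal - ((n : ℝ) ^ 10)⁻¹) →
        ProbabilityTheory.variance (fun ω => (Y ω : ℝ)) P ≥ γ * n / 2 := by
  refine ⟨⌈(100 / β) ^ 2⌉₊, fun n hn Ω _ P _ Y hY hY2 hloc => ?_⟩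
  set x := β * √n
  have hx : 100 ≤ x := by
    have hn' : (100 / β) ^ 2 ≤ n := (Nat.le_ceil _).trans (Nat.cast_le.2 hn)
    have := Real.le_sqrt_of_sq_le hn'
    rwa [div_le_iff₀' hβ0] at this
  have hx_sqrt : 100 * x ≤ √n := by nlinarith [Real.sqrt_nonneg n]
  have hε : ((n : ℝ) ^ 10)⁻¹ ≤ 1 / (100 * x) := by
    have : 100 * x ≤ (n : ℝ) ^ 10 := calc
      100 * x ≤ √n := hx_sqrt
      _ ≤ √n ^ 20 := le_self_pow₀ (by linarith) (by norm_num)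
      _ = (n : ℝ) ^ 10 := by rw [show 20 = 2 * 10 from rfl, pow_mul, Real.sq_sqrt n.cast_nonneg]
    rw [one_div]
    exact inv_anti₀ (by positivity) this
  have hγn : γ * n = (x / 8) ^ 2 := by
    rw [hγ, div_pow, mul_pow, Real.sq_sqrt n.cast_nonneg]
    ring
  have hmem : MemLp (fun ω => (Y ω : ℝ)) 2 P :=
    (memLp_two_iff_integrable_sq (measurable_from_top.comp hY).aestronglyMeasurable).2 hY2
  rw [ge_iff_le, hγn]
  exact le_variance_of_fibers_comparable hY hmem hx (by linarith) hε
    fun s t hs ht hst => hloc s t hs ht hst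
end

section
/- Let Ω = Ω₁ × ⋯ × Ω_K be a product of probability spaces and X : Ω → ℝ an integrable random variable such that |X(ω) − X(ω′)| ≤ 1 whenever ω and ω′ differ in exactly one coordinate. Then for every t > 0, P(|X − E[X]| ≥ t) ≤ 2·exp(−t²/(2K)). -/
/-!
Split the product space as `Ω₀ × Ω'` and let `g ω' = ∫ X (a, ω') dμ₀(a)`. For fixed `ω'` the
section `a ↦ X (a, ω')` has oscillation at most `c₀`, so by Hoeffding's lemma it is
`c₀ ^ 2`-sub-Gaussian around `g ω'`; and `g` again has bounded differences in the remaining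
coordinates, so by induction it is `∑_{i > 0} c_i ^ 2`-sub-Gaussian around `E X`. Integrating the
first bound over `ω'` against the second (Fubini) shows that `X - E X` is `∑ c_i ^ 2`-sub-Gaussian,
and the Chernoff bound on both tails gives the claim, where `∑ c_i ^ 2 = K`.
-/

open MeasureTheory ProbabilityTheory Real
open scoped NNReal

lemma mem_Icc_of_abs_sub_le {α : Type*} {f : α → ℝ} {c : ℝ} (h : ∀ a b, |f a - f b| ≤ c)
    (a₀ a : α) : f a ∈ Set.Icc (f a₀ - c) (f a₀ + c) := by
  have := abs_sub_le_iff.1 (h a a₀)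
  constructor <;> linarith

section Oscillation

variable {α : Type*} [MeasurableSpace α] {μ : Measure α} [IsProbabilityMeasure μ]
  {f g : α → ℝ} {c : ℝ}

lemma integrable_of_abs_sub_le (hf : AEMeasurable f μ) (h : ∀ a b, |f a - f b| ≤ c) :
    Integrable f μ :=
  have ⟨a₀⟩ := nonempty_of_isProbabilityMeasure μ
  .of_mem_Icc _ _ hf (ae_of_all _ (mem_Icc_of_abs_sub_le h a₀))

lemma abs_integral_sub_integral_le (hf : Integrable f μ) (hg : Integrable g μ)
    (h : ∀ a, |f a - g a| ≤ c) : |∫ a, f a ∂μ - ∫ a, g a ∂μ| ≤ c := by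
  rw [← integral_sub hf hg]
  simpa using norm_integral_le_of_norm_le_const (μ := μ) (f := fun a ↦ f a - g a) (ae_of_all _ h)

lemma hasSubgaussianMGF_of_abs_sub_le {c : ℝ≥0} (hf : AEMeasurable f μ)
    (h : ∀ a b, |f a - f b| ≤ c) : HasSubgaussianMGF (fun a ↦ f a - μ[f]) (c ^ 2) μ := by
  obtain ⟨a₀⟩ := nonempty_of_isProbabilityMeasure μ
  convert hasSubgaussianMGF_of_mem_Icc hf (ae_of_all _ (mem_Icc_of_abs_sub_le h a₀))
  ext
  simp only [add_sub_sub_cancel, NNReal.coe_div, coe_nnnorm, norm_eq_abs]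
  rw [← two_mul, abs_of_nonneg (by positivity)]
  norm_num

end Oscillation

lemma ProbabilityTheory.HasSubgaussianMGF.measureReal_abs_ge_le {Ω : Type*} [MeasurableSpace Ω]
    {μ : Measure Ω} {Y : Ω → ℝ} {c : ℝ≥0} (hY : HasSubgaussianMGF Y c μ) {ε : ℝ} (hε : 0 ≤ ε) :
    μ.real {ω | ε ≤ |Y ω|} ≤ 2 * exp (-ε ^ 2 / (2 * c)) := by
  have hsplit : {ω | ε ≤ |Y ω|} = {ω | ε ≤ Y ω} ∪ {ω | ε ≤ (-Y) ω} :=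
    Set.ext fun ω ↦ (le_abs : ε ≤ |Y ω| ↔ _)
  calc μ.real {ω | ε ≤ |Y ω|}
      ≤ μ.real {ω | ε ≤ Y ω} + μ.real {ω | ε ≤ (-Y) ω} := hsplit ▸ measureReal_union_le _ _
    _ ≤ exp (-ε ^ 2 / (2 * c)) + exp (-ε ^ 2 / (2 * c)) :=
        add_le_add (hY.measure_ge_le hε) (hY.neg.measure_ge_le hε)
    _ = 2 * exp (-ε ^ 2 / (2 * c)) := by ring

lemma hasSubgaussianMGF_prod_of_sections {α β : Type*} [MeasurableSpace α] [MeasurableSpace β]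
    {μ : Measure α} {ν : Measure β} [SFinite μ] [SFinite ν]
    {F : α × β → ℝ} (hF : Measurable F) {m : ℝ} {c₁ c₂ : ℝ≥0}
    (hsec : ∀ b, HasSubgaussianMGF (fun a ↦ F (a, b) - ∫ a', F (a', b) ∂μ) c₁ μ)
    (hmean : HasSubgaussianMGF (fun b ↦ ∫ a, F (a, b) ∂μ - m) c₂ ν) :
    HasSubgaussianMGF (fun p ↦ F p - m) (c₁ + c₂) (μ.prod ν) := by
  set g := fun b ↦ ∫ a, F (a, b) ∂μ
  have hsplit (t : ℝ) (a : α) (b : β) :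
      exp (t * (F (a, b) - m)) = exp (t * (F (a, b) - g b)) * exp (t * (g b - m)) := by
    rw [← exp_add]; ring_nf
  have hinner (t : ℝ) (b : β) : ∫ a, exp (t * (F (a, b) - m)) ∂μ
      = mgf (fun a ↦ F (a, b) - g b) μ t * exp (t * (g b - m)) := by
    simp_rw [hsplit]
    exact integral_mul_const _ _
  have hinner_le (t : ℝ) (b : β) : ∫ a, exp (t * (F (a, b) - m)) ∂μ
      ≤ exp (c₁ * t ^ 2 / 2) * exp (t * (g b - m)) := by
    rw [hinner]
    gcongr
    exact (hsec b).mgf_le t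
  have hint (t : ℝ) : Integrable (fun p ↦ exp (t * (F p - m))) (μ.prod ν) := by
    rw [integrable_prod_iff' (by fun_prop)]
    refine ⟨ae_of_all _ fun b ↦ ?_, ?_⟩
    · simp_rw [hsplit]
      exact ((hsec b).integrable_exp_mul t).mul_const _
    · simp only [norm_eq_abs, abs_exp]
      refine ((hmean.integrable_exp_mul t).const_mul (exp (c₁ * t ^ 2 / 2))).mono'
        (Measurable.stronglyMeasurable (f := fun p ↦ exp (t * (F p - m)))
          (by fun_prop)).integral_prod_left'.aestronglyMeasurable
        (ae_of_all _ fun b ↦ ?_)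
      rw [norm_of_nonneg (integral_nonneg fun _ ↦ (exp_pos _).le)]
      exact hinner_le t b
  refine ⟨hint, fun t ↦ ?_⟩
  calc mgf (fun p ↦ F p - m) (μ.prod ν) t
      = ∫ b, ∫ a, exp (t * (F (a, b) - m)) ∂μ ∂ν := integral_prod_symm _ (hint t)
    _ ≤ ∫ b, exp (c₁ * t ^ 2 / 2) * exp (t * (g b - m)) ∂ν :=
        integral_mono_of_nonneg (ae_of_all _ fun _ ↦ integral_nonneg fun _ ↦ (exp_pos _).le)
          ((hmean.integrable_exp_mul t).const_mul _) (ae_of_all _ (hinner_le t))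
    _ = exp (c₁ * t ^ 2 / 2) * mgf (fun b ↦ g b - m) ν t := integral_const_mul _ _
    _ ≤ exp (c₁ * t ^ 2 / 2) * exp (c₂ * t ^ 2 / 2) := by gcongr; exact hmean.mgf_le t
    _ = exp (↑(c₁ + c₂) * t ^ 2 / 2) := by rw [← exp_add]; push_cast; ring_nf

def HasBoundedDifferences {ι : Type*} {Ω : ι → Type*} (X : (∀ i, Ω i) → ℝ) (c : ι → ℝ≥0) : Prop :=
  ∀ (ω ω' : ∀ i, Ω i) (j : ι), (∀ i, i ≠ j → ω i = ω' i) → |X ω - X ω'| ≤ c j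

namespace HasBoundedDifferences

section InsertNth

variable {n : ℕ} {Ω : Fin (n + 1) → Type*} {X : (∀ i, Ω i) → ℝ} {c : Fin (n + 1) → ℝ≥0}

lemma abs_sub_insertNth_le (hX : HasBoundedDifferences X c) (i : Fin (n + 1))
    (ρ : ∀ j, Ω (i.succAbove j)) (a b : Ω i) :
    |X (i.insertNth a ρ) - X (i.insertNth b ρ)| ≤ c i :=
  hX _ _ i fun k hk ↦ by
    obtain ⟨k, rfl⟩ := Fin.exists_succAbove_eq hk
    simp only [Fin.insertNth_apply_succAbove]

lemma insertNth (hX : HasBoundedDifferences X c) (i : Fin (n + 1)) (a : Ω i) :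
    HasBoundedDifferences (fun ρ ↦ X (i.insertNth a ρ)) (fun j ↦ c (i.succAbove j)) :=
  fun ρ ρ' j hj ↦ hX _ _ (i.succAbove j) fun k hk ↦ by
    rcases eq_or_ne k i with rfl | hki
    · simp only [Fin.insertNth_apply_same]
    · obtain ⟨k, rfl⟩ := Fin.exists_succAbove_eq hki
      simp only [Fin.insertNth_apply_succAbove]
      exact hj k (ne_of_apply_ne _ hk)

end InsertNth

lemma integral {α ι : Type*} [MeasurableSpace α] {μ : Measure α} [IsProbabilityMeasure μ]
    {Ω : ι → Type*} {Y : α → (∀ i, Ω i) → ℝ} {c : ι → ℝ≥0}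
    (hY : ∀ a, HasBoundedDifferences (Y a) c) (hint : ∀ ω, Integrable (fun a ↦ Y a ω) μ) :
    HasBoundedDifferences (fun ω ↦ ∫ a, Y a ω ∂μ) c :=
  fun ω ω' j hj ↦ abs_integral_sub_integral_le (hint ω) (hint ω') fun a ↦ hY a ω ω' j hj

end HasBoundedDifferences

theorem hasSubgaussianMGF_sub_integral_of_hasBoundedDifferences {K : ℕ} {Ω : Fin K → Type*}
    [∀ i, MeasurableSpace (Ω i)] {μ : ∀ i, Measure (Ω i)} [∀ i, IsProbabilityMeasure (μ i)]
    {X : (∀ i, Ω i) → ℝ} {c : Fin K → ℝ≥0} (hXm : Measurable X) (hX : HasBoundedDifferences X c) :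
    HasSubgaussianMGF (fun ω ↦ X ω - ∫ ω', X ω' ∂Measure.pi μ) (∑ i, c i ^ 2) (Measure.pi μ) := by
  induction K with
  | zero =>
    have hconst (ω : ∀ i, Ω i) : X ω - ∫ ω', X ω' ∂Measure.pi μ = 0 := by
      simp [Subsingleton.elim _ ω]
    simp [hconst]
  | succ K ih =>
    have he := measurePreserving_piFinSuccAbove μ 0
    set e := MeasurableEquiv.piFinSuccAbove Ω 0
    let F : Ω 0 × (∀ j, Ω (Fin.succAbove 0 j)) → ℝ := fun p ↦ X (e.symm p)
    have hFm : Measurable F := hXm.comp e.symm.measurable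
    let g := fun ρ ↦ ∫ a, F (a, ρ) ∂μ 0
    have hsec (ρ) : HasSubgaussianMGF (fun a ↦ F (a, ρ) - ∫ a', F (a', ρ) ∂μ 0) (c 0 ^ 2) (μ 0) :=
      hasSubgaussianMGF_of_abs_sub_le (by fun_prop) (hX.abs_sub_insertNth_le 0 ρ)
    have hg : HasBoundedDifferences g (fun j ↦ c (Fin.succAbove 0 j)) :=
      HasBoundedDifferences.integral (fun a ↦ hX.insertNth 0 a) fun ρ ↦
        integrable_of_abs_sub_le (by fun_prop) (hX.abs_sub_insertNth_le 0 ρ)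
    have hgm : Measurable g := hFm.stronglyMeasurable.integral_prod_left'.measurable
    have hprod := hasSubgaussianMGF_prod_of_sections hFm hsec
      (ih (μ := fun j ↦ μ (Fin.succAbove 0 j)) hgm hg)
    have hFint : Integrable F ((μ 0).prod (Measure.pi fun j ↦ μ (Fin.succAbove 0 j))) :=
      (integrable_add_const_iff (c := -∫ ρ, g ρ ∂Measure.pi _)).1
        (by simpa only [sub_eq_add_neg] using hprod.integrable)
    have hmean : ∫ ω, X ω ∂Measure.pi μ = ∫ ρ, g ρ ∂Measure.pi fun j ↦ μ (Fin.succAbove 0 j) := by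
      rw [← integral_prod_symm F hFint, ← he.integral_comp e.measurableEmbedding]
      simp only [F, e.symm_apply_apply]
    rw [← he.map_eq] at hprod
    rw [Fin.sum_univ_succAbove _ 0, hmean]
    simpa only [Function.comp_def, F, e.symm_apply_apply] using
      hprod.of_map e.measurable.aemeasurable

theorem stmt_8_general (K : ℕ) (Ω : Fin K → Type) (mΩ : ∀ i, MeasurableSpace (Ω i))
    (μ : ∀ i, Measure (Ω i)) (hμ : ∀ i, IsProbabilityMeasure (μ i))
    (X : (∀ i, Ω i) → ℝ) (hXm : Measurable X)
    (hlip : ∀ (ω ω' : ∀ i, Ω i) (j : Fin K),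
      (∀ i, i ≠ j → ω i = ω' i) → |X ω - X ω'| ≤ 1)
    (t : ℝ) (ht : 0 < t) :
    ((Measure.pi μ) {ω | |X ω - ∫ ω', X ω' ∂(Measure.pi μ)| ≥ t}).toReal
      ≤ 2 * Real.exp (-t ^ 2 / (2 * K)) := by
  have hX : HasBoundedDifferences X 1 := hlip
  simpa [measureReal_def] using
    (hasSubgaussianMGF_sub_integral_of_hasBoundedDifferences hXm hX).measureReal_abs_ge_le ht.le

/-- Azuma / bounded differences (McDiarmid) inequality with Lipschitz
constant 1 in each of `K` coordinates. -/
theorem stmt_8 (K : ℕ) (Ω : Fin K → Type) (mΩ : ∀ i, MeasurableSpace (Ω i))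
    (μ : ∀ i, Measure (Ω i)) (hμ : ∀ i, IsProbabilityMeasure (μ i))
    (X : (∀ i, Ω i) → ℝ) (hXm : Measurable X)
    (hint : Integrable X (Measure.pi μ))
    (hlip : ∀ (ω ω' : ∀ i, Ω i) (j : Fin K),
      (∀ i, i ≠ j → ω i = ω' i) → |X ω - X ω'| ≤ 1)
    (t : ℝ) (ht : 0 < t) :
    ((Measure.pi μ) {ω | |X ω - ∫ ω', X ω' ∂(Measure.pi μ)| ≥ t}).toReal
      ≤ 2 * Real.exp (-t ^ 2 / (2 * K)) :=
  stmt_8_general K Ω mΩ μ hμ X hXm hlip t ht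
end

section
/- Let H be a d-uniform hypergraph on V and α, β ⊆ V with β a component of H of size at most k. After deleting all edges of H that intersect α, the vertex set β splits into at most k components. Hence ∑_{γ: γ∩β≠∅, γ∩α=∅} |γ|·I_γ^α ≤ k², where I_γ^α indicates that γ is a component of H with edges meeting α removed. -/
/-! Call `β` edge-closed in `K` if every edge of `K` meeting `β` lies inside `β`. A walk cannot
leave an edge-closed set, so a component meeting an edge-closed set lies inside it; in particular
two components of the same hypergraph are equal or disjoint. Deleting edges keeps the component `β`
of `H` edge-closed, so the components of `delEdges H α` meeting `β` are disjoint nonempty subsets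
of `β`: there are at most `|β| ≤ k` of them and their sizes add up to at most `k ≤ k²`. -/

/-- Two vertices are joined by a walk of edges of `H`. -/
def Reach {V : Type*} (H : Finset (Finset V)) (u v : V) : Prop :=
  Relation.ReflTransGen (fun a b => ∃ e ∈ H, a ∈ e ∧ b ∈ e) u v

/-- The subhypergraph induced on `α` (edges entirely inside `α`) is connected. -/
def InducedConnected {V : Type*} [DecidableEq V] (H : Finset (Finset V)) (α : Finset V) : Prop :=
  ∀ u ∈ α, ∀ v ∈ α, Reach (H.filter (fun e => e ⊆ α)) u v

/-- `α` is a component of `H`. -/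
def IsComponent {V : Type*} [DecidableEq V] (H : Finset (Finset V)) (α : Finset V) : Prop :=
  InducedConnected H α ∧ ∀ e ∈ H, (e ∩ α).Nonempty → e ⊆ α

/-- `H` with all edges meeting `S` deleted. -/
def delEdges {V : Type*} [DecidableEq V] (H : Finset (Finset V)) (S : Finset V) :
    Finset (Finset V) :=
  H.filter (fun e => Disjoint e S)

open Classical in
/-- Real-valued indicator of a proposition. -/
noncomputable def ind (P : Prop) : ℝ := if P then 1 else 0

def IsEdgeClosed {V : Type*} [DecidableEq V] (K : Finset (Finset V)) (β : Finset V) : Prop :=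
  ∀ e ∈ K, (e ∩ β).Nonempty → e ⊆ β

section

variable {V : Type*} [DecidableEq V] {K K' : Finset (Finset V)} {β γ γ' : Finset V}

lemma IsEdgeClosed.mono (hβ : IsEdgeClosed K β) (hK : K' ⊆ K) : IsEdgeClosed K' β :=
  fun e he => hβ e (hK he)

lemma IsComponent.isEdgeClosed (hγ : IsComponent K γ) : IsEdgeClosed K γ := hγ.2

lemma Reach.mem_of_isEdgeClosed {u v : V} (h : Reach K u v) (hβ : IsEdgeClosed K β)
    (hu : u ∈ β) : v ∈ β := by
  induction h with
  | refl => exact hu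
  | tail _ hstep ih =>
    obtain ⟨e, he, hue, hve⟩ := hstep
    exact hβ e he ⟨_, Finset.mem_inter.2 ⟨hue, ih⟩⟩ hve

lemma IsComponent.subset_of_isEdgeClosed (hγ : IsComponent K γ) (hβ : IsEdgeClosed K β)
    (hmeet : (γ ∩ β).Nonempty) : γ ⊆ β := by
  obtain ⟨u, hu⟩ := hmeet
  rw [Finset.mem_inter] at hu
  exact fun w hw =>
    (hγ.1 u hu.1 w hw).mem_of_isEdgeClosed (hβ.mono (Finset.filter_subset _ _)) hu.2

lemma IsComponent.eq_of_not_disjoint (hγ : IsComponent K γ) (hγ' : IsComponent K γ')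
    (h : ¬Disjoint γ γ') : γ = γ' := by
  have hmeet : (γ ∩ γ').Nonempty := Finset.not_disjoint_iff_nonempty_inter.1 h
  refine (hγ.subset_of_isEdgeClosed hγ'.isEdgeClosed hmeet).antisymm ?_
  exact hγ'.subset_of_isEdgeClosed hγ.isEdgeClosed (Finset.inter_comm γ γ' ▸ hmeet)

lemma sum_card_le_card_of_isComponent {F : Finset (Finset V)}
    (hF : ∀ γ ∈ F, IsComponent K γ ∧ γ ⊆ β) : ∑ γ ∈ F, γ.card ≤ β.card := by
  have hdisj : (F : Set (Finset V)).PairwiseDisjoint id := fun γ hγ γ' hγ' hne =>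
    not_not.1 fun h => hne ((hF γ hγ).1.eq_of_not_disjoint (hF γ' hγ').1 h)
  calc ∑ γ ∈ F, γ.card = (F.biUnion id).card := (Finset.card_biUnion hdisj).symm
    _ ≤ β.card := Finset.card_le_card (Finset.biUnion_subset.2 fun γ hγ => (hF γ hγ).2)

lemma card_le_card_of_isComponent {F : Finset (Finset V)}
    (hF : ∀ γ ∈ F, IsComponent K γ ∧ γ.Nonempty ∧ γ ⊆ β) : F.card ≤ β.card :=
  calc F.card = ∑ _γ ∈ F, 1 := Finset.card_eq_sum_ones F
    _ ≤ ∑ γ ∈ F, γ.card := Finset.sum_le_sum fun γ hγ => Finset.card_pos.2 (hF γ hγ).2.1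
    _ ≤ β.card := sum_card_le_card_of_isComponent fun γ hγ => ⟨(hF γ hγ).1, (hF γ hγ).2.2⟩

end

open Classical in
theorem stmt_13_general {n : ℕ} (H : Finset (Finset (Fin n)))
    (α β : Finset (Fin n)) (k : ℕ)
    (hβ : IsComponent H β) (hβk : β.card ≤ k) :
    ((β.powerset.filter
        (fun γ => γ.Nonempty ∧ IsComponent (delEdges H α) γ)).card ≤ k) ∧
    (∑ γ ∈ (Finset.univ : Finset (Fin n)).powerset.filter
          (fun γ => (γ ∩ β).Nonempty ∧ Disjoint γ α),
        (γ.card : ℝ) * ind (IsComponent (delEdges H α) γ)) ≤ (k : ℝ) ^ 2 := by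
  set K := delEdges H α
  have hβK : IsEdgeClosed K β := hβ.isEdgeClosed.mono (Finset.filter_subset _ _)
  refine ⟨(card_le_card_of_isComponent (K := K) fun γ hγ => ?_).trans hβk, ?_⟩
  · obtain ⟨hγβ, hne, hγ⟩ := Finset.mem_filter.1 hγ
    exact ⟨hγ, hne, Finset.mem_powerset.1 hγβ⟩
  set S := (Finset.univ : Finset (Fin n)).powerset.filter
    (fun γ => (γ ∩ β).Nonempty ∧ Disjoint γ α)
  have hS : ∑ γ ∈ S.filter (IsComponent K ·), γ.card ≤ β.card :=
    sum_card_le_card_of_isComponent fun γ hγ =>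
      have hmem := Finset.mem_filter.1 hγ
      ⟨hmem.2, hmem.2.subset_of_isEdgeClosed hβK (Finset.mem_filter.1 hmem.1).2.1⟩
  calc ∑ γ ∈ S, (γ.card : ℝ) * ind (IsComponent K γ)
      = ∑ γ ∈ S.filter (IsComponent K ·), (γ.card : ℝ) := by
        simp only [Finset.sum_filter, ind, mul_ite, mul_one, mul_zero]
    _ ≤ k := by exact_mod_cast hS.trans hβk
    _ ≤ (k : ℝ) ^ 2 := by exact_mod_cast Nat.le_self_pow two_ne_zero k

open Classical in
/-- If `β` is a component of `H` of size at most `k`, then after deleting all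
edges meeting `α` the set `β` splits into at most `k` components, and
`∑_{γ : γ∩β≠∅, γ∩α=∅} |γ|·I_γ^α ≤ k²`. -/
theorem stmt_13 {n d : ℕ} (hd : 2 ≤ d) (H : Finset (Finset (Fin n)))
    (hH : ∀ e ∈ H, e.card = d) (α β : Finset (Fin n)) (k : ℕ)
    (hβ : IsComponent H β) (hβk : β.card ≤ k) :
    ((β.powerset.filter
        (fun γ => γ.Nonempty ∧ IsComponent (delEdges H α) γ)).card ≤ k) ∧
    (∑ γ ∈ (Finset.univ : Finset (Fin n)).powerset.filter
          (fun γ => (γ ∩ β).Nonempty ∧ Disjoint γ α),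
        (γ.card : ℝ) * ind (IsComponent (delEdges H α) γ)) ≤ (k : ℝ) ^ 2 :=
  stmt_13_general H α β k hβ hβk
end
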